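/- arXiv:math/0701847 — 5 statements merged into one kernel-verified Lean document; each statement's English description precedes it below -/
import Mathlib

section
/- Let H be a real inner product space, let T and G be continuous linear operators on H that are both symmetric (self-adjoint), let φ_1, …, φ_k be an orthonormal family in H with T φ_i = λ_i φ_i for real numbers λ_1, …, λ_k, and let Λ be a real number such that Λ ≥ λ_i for every i = 1, …, k and such that Λ‖ψ‖² ≤ ⟪T ψ, ψ⟫ for every ψ ∈ H orthogonal to each of φ_1, …, φ_k. Then ∑_{i=1}^k (Λ − λ_i)² ⟪[T,G] φ_i, G φ_i⟫ ≤ ∑_{i=1}^k (Λ − λ_i) ‖[T,G] φ_i‖². (This is the abstract commutator inequality established by the proof of Theorem 3.1, before the geometric identities are substituted.) -/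
/-!
Put `S = T - Λ`, `cᵢ = Λ - λᵢ ≥ 0` and `u = G φᵢ`, so that `[T, G] φᵢ = S u + cᵢ u` and
`cᵢ ‖[T, G] φᵢ‖² - cᵢ² ⟪[T, G] φᵢ, u⟫ = cᵢ (‖S u‖² + cᵢ ⟪S u, u⟫)`.
Split `u` into its component `∑ⱼ ⟪φⱼ, u⟫ φⱼ` in the span of the `φⱼ`, on which `S` acts diagonally,
and the orthogonal remainder `ψ`, which `S` keeps orthogonal to the `φⱼ`. The remainder contributes
`cᵢ ‖S ψ‖² + cᵢ² ⟪S ψ, ψ⟫ ≥ 0` by the gap hypothesis; the span part contributes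
`∑ⱼ cᵢ cⱼ (cⱼ - cᵢ) ⟪φⱼ, G φᵢ⟫²`, which is antisymmetric in `(i, j)` because `G` is symmetric,
so it cancels after summing over `i`.
-/

open scoped RealInnerProductSpace
open Finset

section

variable {E ι : Type*} [NormedAddCommGroup E] [InnerProductSpace ℝ E] [Fintype ι] {φ : ι → E}

theorem inner_sum_smul_eq_zero_of_forall_inner_eq_zero {w : E} (hw : ∀ j, ⟪w, φ j⟫ = 0)
    (a : ι → ℝ) : ⟪w, ∑ j, a j • φ j⟫ = 0 := by
  simp [inner_sum, real_inner_smul_right, hw]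

variable (φ) in
def orthogonalRemainder (u : E) : E := u - ∑ j, ⟪φ j, u⟫ • φ j

theorem Orthonormal.inner_orthogonalRemainder_eq_zero (hφ : Orthonormal ℝ φ) (u : E) (i : ι) :
    ⟪orthogonalRemainder φ u, φ i⟫ = 0 := by
  rw [orthogonalRemainder, inner_sub_left, hφ.inner_left_fintype, real_inner_comm, conj_trivial,
    sub_self]

variable {S : E →ₗ[ℝ] E} {μ : ι → ℝ}

theorem map_sum_smul_of_apply_eq_smul (hSφ : ∀ j, S (φ j) = μ j • φ j) (a : ι → ℝ) :
    S (∑ j, a j • φ j) = ∑ j, (μ j * a j) • φ j := by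
  simp only [map_sum, map_smul, hSφ, smul_smul, mul_comm]

namespace LinearMap.IsSymmetric

theorem inner_apply_orthogonalRemainder_eq_zero (hS : S.IsSymmetric) (hφ : Orthonormal ℝ φ)
    (hSφ : ∀ j, S (φ j) = μ j • φ j) (u : E) (i : ι) :
    ⟪S (orthogonalRemainder φ u), φ i⟫ = 0 := by
  rw [hS, hSφ, real_inner_smul_right, hφ.inner_orthogonalRemainder_eq_zero, mul_zero]

theorem norm_apply_sq_eq (hS : S.IsSymmetric) (hφ : Orthonormal ℝ φ)
    (hSφ : ∀ j, S (φ j) = μ j • φ j) (u : E) :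
    ‖S u‖ ^ 2 = ‖S (orthogonalRemainder φ u)‖ ^ 2 + ∑ j, (μ j * ⟪φ j, u⟫) ^ 2 := by
  have hu : S u = S (orthogonalRemainder φ u) + ∑ j, (μ j * ⟪φ j, u⟫) • φ j := by
    rw [orthogonalRemainder, map_sub, map_sum_smul_of_apply_eq_smul hSφ, sub_add_cancel]
  rw [hu, norm_add_sq_real, inner_sum_smul_eq_zero_of_forall_inner_eq_zero
      (hS.inner_apply_orthogonalRemainder_eq_zero hφ hSφ u), mul_zero, add_zero,
    ← real_inner_self_eq_norm_sq (∑ j, _), hφ.inner_sum]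
  simp [sq]

theorem inner_apply_self_eq (hS : S.IsSymmetric) (hφ : Orthonormal ℝ φ)
    (hSφ : ∀ j, S (φ j) = μ j • φ j) (u : E) :
    ⟪S u, u⟫ = ⟪S (orthogonalRemainder φ u), orthogonalRemainder φ u⟫
      + ∑ j, μ j * ⟪φ j, u⟫ ^ 2 := by
  set ψ := orthogonalRemainder φ u
  have hu : u = ψ + ∑ j, ⟪φ j, u⟫ • φ j := (sub_add_cancel _ _).symm
  have hψ : ⟪ψ, ∑ j, (μ j * ⟪φ j, u⟫) • φ j⟫ = 0 :=
    inner_sum_smul_eq_zero_of_forall_inner_eq_zero (hφ.inner_orthogonalRemainder_eq_zero u) _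
  have hSψ : ⟪S ψ, ∑ j, ⟪φ j, u⟫ • φ j⟫ = 0 :=
    inner_sum_smul_eq_zero_of_forall_inner_eq_zero
      (hS.inner_apply_orthogonalRemainder_eq_zero hφ hSφ u) _
  conv_lhs => rw [hu]
  rw [map_add, map_sum_smul_of_apply_eq_smul hSφ, inner_add_left, inner_add_right,
    inner_add_right, hSψ, real_inner_comm ψ (∑ j, _), hψ, hφ.inner_sum]
  simp [sq, mul_assoc]

theorem sq_mul_inner_add_smul_le (hS : S.IsSymmetric) (hφ : Orthonormal ℝ φ)
    (hSφ : ∀ j, S (φ j) = μ j • φ j) (hpos : ∀ ψ, (∀ j, ⟪ψ, φ j⟫ = 0) → 0 ≤ ⟪S ψ, ψ⟫)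
    {c : ℝ} (hc : 0 ≤ c) (u : E) :
    c ^ 2 * ⟪S u + c • u, u⟫ + ∑ j, c * μ j * (μ j + c) * ⟪φ j, u⟫ ^ 2 ≤
      c * ‖S u + c • u‖ ^ 2 := by
  have expand : c * ‖S u + c • u‖ ^ 2 - c ^ 2 * ⟪S u + c • u, u⟫ =
      c * (‖S u‖ ^ 2 + c * ⟪S u, u⟫) := by
    simp only [← real_inner_self_eq_norm_sq, inner_add_left, inner_add_right,
      real_inner_smul_left, real_inner_smul_right, real_inner_comm u (S u)]
    ring
  have hsum : ∑ j, c * μ j * (μ j + c) * ⟪φ j, u⟫ ^ 2 =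
      c * (∑ j, (μ j * ⟪φ j, u⟫) ^ 2 + c * ∑ j, μ j * ⟪φ j, u⟫ ^ 2) := by
    rw [mul_sum, ← sum_add_distrib, mul_sum]
    exact sum_congr rfl fun j _ => by ring
  have hψ := hpos _ (hφ.inner_orthogonalRemainder_eq_zero u)
  rw [hS.norm_apply_sq_eq hφ hSφ, hS.inner_apply_self_eq hφ hSφ] at expand
  nlinarith [mul_nonneg hc (sq_nonneg ‖S (orthogonalRemainder φ u)‖), mul_nonneg (sq_nonneg c) hψ]

end LinearMap.IsSymmetric

end

theorem sum_sum_eq_zero_of_antisymm {ι : Type*} [Fintype ι] {f : ι → ι → ℝ}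
    (hf : ∀ i j, f j i = -f i j) : ∑ i, ∑ j, f i j = 0 := by
  have h : ∑ i, ∑ j, f j i = ∑ i, ∑ j, -f i j :=
    sum_congr rfl fun i _ => sum_congr rfl fun j _ => hf i j
  rw [sum_comm] at h
  simp only [sum_neg_distrib] at h
  linarith

theorem abstract_commutator_inequality_general
    {H : Type*} [NormedAddCommGroup H] [InnerProductSpace ℝ H]
    (T G : H →L[ℝ] H)
    (hT : ∀ x y : H, ⟪T x, y⟫ = ⟪x, T y⟫)
    (hG : ∀ x y : H, ⟪G x, y⟫ = ⟪x, G y⟫)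
    (k : ℕ)
    (φ : Fin k → H) (lam : Fin k → ℝ)
    (horth : ∀ i j, ⟪φ i, φ j⟫ = if i = j then (1:ℝ) else 0)
    (heig : ∀ i, T (φ i) = lam i • φ i)
    (Λ : ℝ) (hΛ : ∀ i, lam i ≤ Λ)
    (hgap : ∀ ψ : H, (∀ i, ⟪ψ, φ i⟫ = 0) → Λ * ‖ψ‖ ^ 2 ≤ ⟪T ψ, ψ⟫) :
    ∑ i, (Λ - lam i) ^ 2 * ⟪(T ∘L G - G ∘L T) (φ i), G (φ i)⟫ ≤
      ∑ i, (Λ - lam i) * ‖(T ∘L G - G ∘L T) (φ i)‖ ^ 2 := by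
  have hφ : Orthonormal ℝ φ := orthonormal_iff_ite.mpr horth
  set S : H →ₗ[ℝ] H := (T : H →ₗ[ℝ] H) - Λ • LinearMap.id
  have hS : S.IsSymmetric :=
    LinearMap.IsSymmetric.sub hT (LinearMap.IsSymmetric.id.smul (conj_trivial Λ))
  have hSφ : ∀ j, S (φ j) = (lam j - Λ) • φ j := by simp [S, heig, sub_smul]
  have hpos : ∀ ψ, (∀ j, ⟪ψ, φ j⟫ = 0) → 0 ≤ ⟪S ψ, ψ⟫ := fun ψ hψ => by
    have := hgap ψ hψ
    simp only [S, LinearMap.sub_apply, LinearMap.smul_apply, LinearMap.id_apply,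
      ContinuousLinearMap.coe_coe, inner_sub_left, real_inner_smul_left, real_inner_self_eq_norm_sq]
    linarith
  have hB : ∀ i, (T ∘L G - G ∘L T) (φ i) = S (G (φ i)) + (Λ - lam i) • G (φ i) := fun i => by
    simp only [S, sub_apply, ContinuousLinearMap.comp_apply, heig, map_smul,
      LinearMap.sub_apply, LinearMap.smul_apply, LinearMap.id_apply, ContinuousLinearMap.coe_coe]
    module
  have hcancel : ∑ i, ∑ j, (Λ - lam i) * (lam j - Λ) * (lam j - Λ + (Λ - lam i)) *
      ⟪φ j, G (φ i)⟫ ^ 2 = 0 :=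
    sum_sum_eq_zero_of_antisymm fun i j => by rw [← hG, real_inner_comm]; ring
  calc ∑ i, (Λ - lam i) ^ 2 * ⟪(T ∘L G - G ∘L T) (φ i), G (φ i)⟫
      = ∑ i, ((Λ - lam i) ^ 2 * ⟪(T ∘L G - G ∘L T) (φ i), G (φ i)⟫ + ∑ j, (Λ - lam i) *
          (lam j - Λ) * (lam j - Λ + (Λ - lam i)) * ⟪φ j, G (φ i)⟫ ^ 2) := by
        rw [sum_add_distrib, hcancel, add_zero]
    _ ≤ ∑ i, (Λ - lam i) * ‖(T ∘L G - G ∘L T) (φ i)‖ ^ 2 := sum_le_sum fun i _ => by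
        rw [hB]; exact hS.sq_mul_inner_add_smul_le hφ hSφ hpos (sub_nonneg.2 (hΛ i)) _

/-- Abstract commutator inequality underlying Theorem 3.1. -/
theorem abstract_commutator_inequality
    {H : Type*} [NormedAddCommGroup H] [InnerProductSpace ℝ H]
    (T G : H →L[ℝ] H)
    (hT : ∀ x y : H, ⟪T x, y⟫ = ⟪x, T y⟫)
    (hG : ∀ x y : H, ⟪G x, y⟫ = ⟪x, G y⟫)
    (k : ℕ) (hk : 1 ≤ k)
    (φ : Fin k → H) (lam : Fin k → ℝ)
    (horth : ∀ i j, ⟪φ i, φ j⟫ = if i = j then (1:ℝ) else 0)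
    (heig : ∀ i, T (φ i) = lam i • φ i)
    (Λ : ℝ) (hΛ : ∀ i, lam i ≤ Λ)
    (hgap : ∀ ψ : H, (∀ i, ⟪ψ, φ i⟫ = 0) → Λ * ‖ψ‖ ^ 2 ≤ ⟪T ψ, ψ⟫) :
    ∑ i, (Λ - lam i) ^ 2 * ⟪(T ∘L G - G ∘L T) (φ i), G (φ i)⟫ ≤
      ∑ i, (Λ - lam i) * ‖(T ∘L G - G ∘L T) (φ i)‖ ^ 2 :=
  abstract_commutator_inequality_general T G hT hG k φ lam horth heig Λ hΛ hgap
end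

section
/- Let H be a real inner product space, let T be a symmetric (self-adjoint) continuous linear operator on H, let G_1, …, G_N be symmetric continuous linear operators on H, let φ_1, …, φ_k be an orthonormal family with T φ_i = λ_i φ_i (λ_i ∈ ℝ), and let Λ ∈ ℝ satisfy Λ ≥ λ_i for all i and Λ‖ψ‖² ≤ ⟪T ψ, ψ⟫ for every ψ orthogonal to each φ_j. Suppose moreover that n > 0 is a real number with ∑_{p=1}^N ⟪[T,G_p] φ_i, G_p φ_i⟫ ≥ n for every i = 1, …, k. Then n · ∑_{i=1}^k (Λ − λ_i)² ≤ ∑_{i=1}^k (Λ − λ_i) ∑_{p=1}^N ‖[T,G_p] φ_i‖². (This is the summed abstract form of inequality (3.1) of Theorem 3.1.) -/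
open scoped RealInnerProductSpace


private lemma antisym_double_sum {k : ℕ} (δ : Fin k → ℝ) (a : Fin k → Fin k → ℝ)
    (hsym : ∀ i j, a i j = a j i) :
    ∑ i, ∑ j, δ i ^ 2 * ((δ i - δ j) * a i j ^ 2) =
    ∑ i, ∑ j, δ i * ((δ i - δ j) ^ 2 * a i j ^ 2) := by
  have hS : ∑ i, ∑ j, (δ i * δ j * (δ i - δ j) * a i j ^ 2) = 0 := by
    have h1 : ∑ i, ∑ j, (δ i * δ j * (δ i - δ j) * a i j ^ 2)
        = ∑ j, ∑ i, (δ i * δ j * (δ i - δ j) * a i j ^ 2) := Finset.sum_comm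
    have h2 : ∑ j : Fin k, ∑ i : Fin k, (δ i * δ j * (δ i - δ j) * a i j ^ 2)
        = ∑ j : Fin k, ∑ i : Fin k, -(δ j * δ i * (δ j - δ i) * a j i ^ 2) := by
      apply Finset.sum_congr rfl; intro j _
      apply Finset.sum_congr rfl; intro i _
      rw [hsym i j]; ring
    simp only [Finset.sum_neg_distrib] at h2
    linarith [h1, h2]
  rw [← sub_eq_zero]
  calc ∑ i, ∑ j, δ i ^ 2 * ((δ i - δ j) * a i j ^ 2)
      - ∑ i, ∑ j, δ i * ((δ i - δ j) ^ 2 * a i j ^ 2)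
      = ∑ i, ∑ j, (δ i * δ j * (δ i - δ j) * a i j ^ 2) := by
        rw [← Finset.sum_sub_distrib]
        apply Finset.sum_congr rfl; intro i _
        rw [← Finset.sum_sub_distrib]
        apply Finset.sum_congr rfl; intro j _; ring
    _ = 0 := hS

private lemma key_single
    {H : Type*} [NormedAddCommGroup H] [InnerProductSpace ℝ H]
    (T : H →L[ℝ] H)
    (hT : ∀ x y : H, ⟪T x, y⟫ = ⟪x, T y⟫)
    (G : H →L[ℝ] H)
    (hG : ∀ x y : H, ⟪G x, y⟫ = ⟪x, G y⟫)
    (k : ℕ)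
    (φ : Fin k → H) (lam : Fin k → ℝ)
    (horth : ∀ i j, ⟪φ i, φ j⟫ = if i = j then (1:ℝ) else 0)
    (heig : ∀ i, T (φ i) = lam i • φ i)
    (Λ : ℝ) (hΛ : ∀ i, lam i ≤ Λ)
    (hgap : ∀ ψ : H, (∀ i, ⟪ψ, φ i⟫ = 0) → Λ * ‖ψ‖ ^ 2 ≤ ⟪T ψ, ψ⟫) :
    ∑ i, (Λ - lam i) ^ 2 * ⟪(T ∘L G - G ∘L T) (φ i), G (φ i)⟫ ≤
      ∑ i, (Λ - lam i) * ‖(T ∘L G - G ∘L T) (φ i)‖ ^ 2 := by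
  set a : Fin k → Fin k → ℝ := fun i j => ⟪G (φ i), φ j⟫ with ha
  set v : Fin k → H := fun i => ∑ j, a i j • φ j with hv
  set ψ : Fin k → H := fun i => G (φ i) - v i with hψ
  have hGφ : ∀ i, G (φ i) = v i + ψ i := by intro i; simp [hψ]
  have hva : ∀ i j, ⟪v i, φ j⟫ = a i j := by
    intro i j
    simp only [hv, sum_inner, real_inner_smul_left, horth]
    simp [Finset.sum_ite_eq']
  have hψφ : ∀ i j, ⟪ψ i, φ j⟫ = 0 := by
    intro i j
    simp only [hψ, inner_sub_left, hva]
    simp [ha]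
  have hφψ : ∀ i j, ⟪φ j, ψ i⟫ = 0 := by
    intro i j; rw [real_inner_comm]; exact hψφ i j
  have hsym : ∀ i j, a i j = a j i := by
    intro i j
    simp only [ha]
    rw [hG, real_inner_comm]
  set u : Fin k → H := fun i => T (G (φ i)) - lam i • G (φ i) with hu'
  have hcomm : ∀ i, (T ∘L G - G ∘L T) (φ i) = u i := by
    intro i
    simp [hu', heig i, map_smul]
  set r : Fin k → H := fun i => T (ψ i) - lam i • ψ i with hr
  have hrφ : ∀ i j, ⟪r i, φ j⟫ = 0 := by
    intro i j
    simp only [hr, inner_sub_left, real_inner_smul_left]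
    rw [hT, heig j, real_inner_smul_right, hψφ]
    ring
  have hφr : ∀ i j, ⟪φ j, r i⟫ = 0 := by
    intro i j; rw [real_inner_comm]; exact hrφ i j
  have hu : ∀ i, u i = (∑ j, ((lam j - lam i) * a i j) • φ j) + r i := by
    intro i
    simp only [hu', hr, hGφ i, map_add, map_sum, map_smul, heig, smul_add, Finset.smul_sum,
      smul_smul, sub_smul, hv]
    have hsplit : ∑ j, ((lam j - lam i) * a i j) • φ j
        = (∑ j, (a i j * lam j) • φ j) - ∑ j, (lam i * a i j) • φ j := by
      rw [← Finset.sum_sub_distrib]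
      apply Finset.sum_congr rfl; intro j _
      rw [← sub_smul]; congr 1; ring
    rw [hsplit]
    abel
  have huφ : ∀ i m, ⟪u i, φ m⟫ = (lam m - lam i) * a i m := by
    intro i m
    rw [hu i, inner_add_left, hrφ, sum_inner]
    simp only [real_inner_smul_left, horth]
    simp only [mul_ite, mul_one, mul_zero, Finset.sum_ite_eq', Finset.mem_univ, if_true,
      add_zero]
  have huψ : ∀ i, ⟪u i, ψ i⟫ = ⟪r i, ψ i⟫ := by
    intro i
    rw [hu i, inner_add_left, sum_inner]
    simp only [real_inner_smul_left, hφψ]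
    simp
  set q : Fin k → ℝ := fun i => ⟪r i, ψ i⟫ with hq'
  have hB : ∀ i, ⟪u i, G (φ i)⟫ = (∑ j, (lam j - lam i) * a i j ^ 2) + q i := by
    intro i
    rw [hGφ i, inner_add_right, huψ i]
    congr 1
    rw [hv, inner_sum]
    apply Finset.sum_congr rfl; intro j _
    rw [real_inner_smul_right, huφ]
    ring
  have hur : ∀ i, ⟪u i, r i⟫ = ⟪r i, r i⟫ := by
    intro i
    rw [hu i, inner_add_left, sum_inner]
    simp only [real_inner_smul_left, hφr]
    simp
  have hC : ∀ i, ‖u i‖ ^ 2 = (∑ j, (lam j - lam i) ^ 2 * a i j ^ 2) + ‖r i‖ ^ 2 := by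
    intro i
    rw [← real_inner_self_eq_norm_sq, ← real_inner_self_eq_norm_sq]
    nth_rewrite 2 [hu i]
    rw [inner_add_right, hur]
    congr 1
    rw [inner_sum]
    apply Finset.sum_congr rfl; intro j _
    rw [real_inner_smul_right, huφ]
    ring
  have hqlb : ∀ i, (Λ - lam i) * ‖ψ i‖ ^ 2 ≤ q i := by
    intro i
    have hg := hgap (ψ i) (fun j => hψφ i j)
    have : q i = ⟪T (ψ i), ψ i⟫ - lam i * ‖ψ i‖ ^ 2 := by
      show ⟪T (ψ i) - lam i • ψ i, ψ i⟫ = _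
      rw [inner_sub_left, real_inner_smul_left, real_inner_self_eq_norm_sq]
    linarith [this, hg]
  have hψest : ∀ i, (Λ - lam i) ^ 2 * q i ≤ (Λ - lam i) * ‖r i‖ ^ 2 := by
    intro i
    have hδ : 0 ≤ Λ - lam i := by linarith [hΛ i]
    have hcs : q i ≤ ‖r i‖ * ‖ψ i‖ := real_inner_le_norm _ _
    have hq0 : 0 ≤ q i := le_trans (mul_nonneg hδ (by positivity)) (hqlb i)
    by_cases hψ0 : ‖ψ i‖ = 0
    · have hq00 : q i = 0 := le_antisymm (by rw [hψ0] at hcs; simpa using hcs) hq0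
      rw [hq00, mul_zero]
      exact mul_nonneg hδ (by positivity)
    · have hψpos : 0 < ‖ψ i‖ := lt_of_le_of_ne (norm_nonneg _) (Ne.symm hψ0)
      have e1 : q i * q i ≤ (‖r i‖ * ‖ψ i‖) * (‖r i‖ * ‖ψ i‖) :=
        mul_le_mul hcs hcs hq0 (by positivity)
      have e2 : q i * ((Λ - lam i) * ‖ψ i‖ ^ 2) ≤ q i * q i :=
        mul_le_mul_of_nonneg_left (hqlb i) hq0
      have h1 : ((Λ - lam i) * q i) * ‖ψ i‖ ^ 2 ≤ ‖r i‖ ^ 2 * ‖ψ i‖ ^ 2 := by nlinarith [e1, e2]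
      have h2 : (Λ - lam i) * q i ≤ ‖r i‖ ^ 2 :=
        le_of_mul_le_mul_right h1 (pow_pos hψpos 2)
      calc (Λ - lam i) ^ 2 * q i = (Λ - lam i) * ((Λ - lam i) * q i) := by ring
        _ ≤ (Λ - lam i) * ‖r i‖ ^ 2 := mul_le_mul_of_nonneg_left h2 hδ
  calc ∑ i, (Λ - lam i) ^ 2 * ⟪(T ∘L G - G ∘L T) (φ i), G (φ i)⟫
      = ∑ i, ((∑ j, (Λ - lam i) ^ 2 * (((Λ - lam i) - (Λ - lam j)) * a i j ^ 2))
          + (Λ - lam i) ^ 2 * q i) := by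
        apply Finset.sum_congr rfl; intro i _
        rw [hcomm i, hB i, mul_add, Finset.mul_sum]
        congr 1
        apply Finset.sum_congr rfl; intro j _; ring
    _ = (∑ i, ∑ j, (Λ - lam i) ^ 2 * (((Λ - lam i) - (Λ - lam j)) * a i j ^ 2))
          + ∑ i, (Λ - lam i) ^ 2 * q i := by rw [Finset.sum_add_distrib]
    _ = (∑ i, ∑ j, (Λ - lam i) * (((Λ - lam i) - (Λ - lam j)) ^ 2 * a i j ^ 2))
          + ∑ i, (Λ - lam i) ^ 2 * q i := by
        rw [antisym_double_sum (fun i => Λ - lam i) a hsym]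
    _ ≤ (∑ i, ∑ j, (Λ - lam i) * (((Λ - lam i) - (Λ - lam j)) ^ 2 * a i j ^ 2))
          + ∑ i, (Λ - lam i) * ‖r i‖ ^ 2 := by
        exact add_le_add le_rfl (Finset.sum_le_sum fun i _ => hψest i)
    _ = ∑ i, (Λ - lam i) * ‖(T ∘L G - G ∘L T) (φ i)‖ ^ 2 := by
        rw [← Finset.sum_add_distrib]
        apply Finset.sum_congr rfl; intro i _
        rw [hcomm i, hC i, mul_add, Finset.mul_sum]
        congr 1
        apply Finset.sum_congr rfl; intro j _; ring

/-- Summed abstract form of inequality (3.1) of Theorem 3.1. -/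
theorem summed_abstract_yang_inequality
    {H : Type*} [NormedAddCommGroup H] [InnerProductSpace ℝ H]
    (T : H →L[ℝ] H)
    (hT : ∀ x y : H, ⟪T x, y⟫ = ⟪x, T y⟫)
    (N : ℕ) (G : Fin N → H →L[ℝ] H)
    (hG : ∀ p, ∀ x y : H, ⟪G p x, y⟫ = ⟪x, G p y⟫)
    (k : ℕ) (hk : 1 ≤ k)
    (φ : Fin k → H) (lam : Fin k → ℝ)
    (horth : ∀ i j, ⟪φ i, φ j⟫ = if i = j then (1:ℝ) else 0)
    (heig : ∀ i, T (φ i) = lam i • φ i)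
    (Λ : ℝ) (hΛ : ∀ i, lam i ≤ Λ)
    (hgap : ∀ ψ : H, (∀ i, ⟪ψ, φ i⟫ = 0) → Λ * ‖ψ‖ ^ 2 ≤ ⟪T ψ, ψ⟫)
    (n : ℝ) (hn : 0 < n)
    (hlower : ∀ i, n ≤ ∑ p, ⟪(T ∘L G p - G p ∘L T) (φ i), G p (φ i)⟫) :
    n * ∑ i, (Λ - lam i) ^ 2 ≤
      ∑ i, (Λ - lam i) * ∑ p, ‖(T ∘L G p - G p ∘L T) (φ i)‖ ^ 2 := by
  calc n * ∑ i, (Λ - lam i) ^ 2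
      = ∑ i, (Λ - lam i) ^ 2 * n := by
        rw [Finset.mul_sum]
        exact Finset.sum_congr rfl fun i _ => mul_comm n _
    _ ≤ ∑ i, (Λ - lam i) ^ 2 * ∑ p, ⟪(T ∘L G p - G p ∘L T) (φ i), G p (φ i)⟫ :=
        Finset.sum_le_sum fun i _ =>
          mul_le_mul_of_nonneg_left (hlower i) (sq_nonneg _)
    _ = ∑ p, ∑ i, (Λ - lam i) ^ 2 * ⟪(T ∘L G p - G p ∘L T) (φ i), G p (φ i)⟫ := by
        simp_rw [Finset.mul_sum]; exact Finset.sum_comm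
    _ ≤ ∑ p, ∑ i, (Λ - lam i) * ‖(T ∘L G p - G p ∘L T) (φ i)‖ ^ 2 :=
        Finset.sum_le_sum fun p _ =>
          key_single T hT (G p) (hG p) k φ lam horth heig Λ hΛ hgap
    _ = ∑ i, (Λ - lam i) * ∑ p, ‖(T ∘L G p - G p ∘L T) (φ i)‖ ^ 2 := by
        rw [Finset.sum_comm]; simp_rw [Finset.mul_sum]
end

section
/- Let H be a real inner product space, let T and G be symmetric (self-adjoint) continuous linear operators on H, let φ ∈ H be a unit vector with T φ = λ_1 φ for some λ_1 ∈ ℝ, and set ψ := G φ − ⟪G φ, φ⟫ φ. Let Λ ∈ ℝ satisfy Λ ≥ λ_1 and Λ‖ψ‖² ≤ ⟪T ψ, ψ⟫. Then (Λ − λ_1) ⟪[T,G] φ, G φ⟫ ≤ ‖[T,G] φ‖². (This is the abstract content of inequality (4.8) in the proof of Theorem 4.1.) -/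
/-!
Write `C := [T,G] φ`. Since `T φ = λ₁ φ`, we get `C = (T - λ₁) G φ = (T - λ₁) ψ`, as `G φ` and `ψ`
differ by a multiple of the eigenvector `φ`; by symmetry of `T` the same shift does not change
`⟪C, ·⟫`, so `⟪C, G φ⟫ = ⟪C, ψ⟫ ≥ (Λ - λ₁) ‖ψ‖²`. Expanding `0 ≤ ‖C - (Λ - λ₁) ψ‖²` then gives
the inequality.
-/

open scoped RealInnerProductSpace

section InnerProductSpace

variable {H : Type*} [NormedAddCommGroup H] [InnerProductSpace ℝ H]

theorem mul_inner_le_norm_sq_of_mul_norm_sq_le_inner {a : ℝ} {x y : H} (ha : 0 ≤ a)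
    (h : a * ‖y‖ ^ 2 ≤ ⟪x, y⟫) : a * ⟪x, y⟫ ≤ ‖x‖ ^ 2 := by
  have hexpand : ‖x - a • y‖ ^ 2 = ‖x‖ ^ 2 - 2 * a * ⟪x, y⟫ + a ^ 2 * ‖y‖ ^ 2 := by
    rw [norm_sub_sq_real, real_inner_smul_right, norm_smul, Real.norm_eq_abs, mul_pow, sq_abs]
    ring
  nlinarith [sq_nonneg ‖x - a • y‖, mul_le_mul_of_nonneg_left h ha]

theorem LinearMap.IsSymmetric.inner_apply_sub_smul_add_smul_eigenvector {T : H →ₗ[ℝ] H}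
    (hT : T.IsSymmetric) {φ : H} {μ : ℝ} (heig : T φ = μ • φ) (u : H) (c : ℝ) :
    ⟪T u - μ • u, u + c • φ⟫ = ⟪T u - μ • u, u⟫ := by
  have horth : ⟪T u - μ • u, φ⟫ = 0 := by
    rw [inner_sub_left, hT, heig, real_inner_smul_left, real_inner_smul_right, real_inner_comm]
    ring
  rw [inner_add_right, real_inner_smul_right, horth, mul_zero, add_zero]

end InnerProductSpace

section Module

variable {R M : Type*} [CommRing R] [AddCommGroup M] [Module R M]

theorem LinearMap.apply_add_smul_eigenvector_sub_smul {T : M →ₗ[R] M} {φ : M} {μ : R}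
    (heig : T φ = μ • φ) (u : M) (c : R) :
    T (u + c • φ) - μ • (u + c • φ) = T u - μ • u := by
  rw [map_add, map_smul, heig, smul_add, smul_smul, smul_smul, mul_comm]
  abel

theorem ContinuousLinearMap.commutator_apply_eigenvector [TopologicalSpace M]
    [IsTopologicalAddGroup M] {T G : M →L[R] M} {φ : M} {μ : R} (heig : T φ = μ • φ) :
    (T ∘L G - G ∘L T) φ = T (G φ) - μ • G φ := by
  rw [sub_apply, ContinuousLinearMap.comp_apply,
    ContinuousLinearMap.comp_apply, heig, map_smul]

end Module

theorem abstract_four_eight_general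
    {H : Type*} [NormedAddCommGroup H] [InnerProductSpace ℝ H]
    (T G : H →L[ℝ] H)
    (hT : ∀ x y : H, ⟪T x, y⟫ = ⟪x, T y⟫)
    (φ : H) (lam1 : ℝ) (heig : T φ = lam1 • φ)
    (ψ : H) (hψ : ψ = G φ - ⟪G φ, φ⟫ • φ)
    (Λ : ℝ) (hΛ : lam1 ≤ Λ)
    (hgap : Λ * ‖ψ‖ ^ 2 ≤ ⟪T ψ, ψ⟫) :
    (Λ - lam1) * ⟪(T ∘L G - G ∘L T) φ, G φ⟫ ≤ ‖(T ∘L G - G ∘L T) φ‖ ^ 2 := by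
  have hGφ : G φ = ψ + ⟪G φ, φ⟫ • φ := by rw [hψ, sub_add_cancel]
  have hC : (T ∘L G - G ∘L T) φ = T ψ - lam1 • ψ := by
    rw [ContinuousLinearMap.commutator_apply_eigenvector heig, hGφ]
    exact LinearMap.apply_add_smul_eigenvector_sub_smul (T := (T : H →ₗ[ℝ] H)) heig ψ _
  have hCG : ⟪(T ∘L G - G ∘L T) φ, G φ⟫ = ⟪T ψ - lam1 • ψ, ψ⟫ := by
    rw [hC, hGφ]
    exact LinearMap.IsSymmetric.inner_apply_sub_smul_add_smul_eigenvector hT heig ψ _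
  have hCψ : (Λ - lam1) * ‖ψ‖ ^ 2 ≤ ⟪T ψ - lam1 • ψ, ψ⟫ := by
    rw [inner_sub_left, real_inner_smul_left, real_inner_self_eq_norm_sq]
    linarith
  rw [hCG, hC]
  exact mul_inner_le_norm_sq_of_mul_norm_sq_le_inner (sub_nonneg.mpr hΛ) hCψ

/-- Abstract content of inequality (4.8) in the proof of Theorem 4.1. -/
theorem abstract_four_eight
    {H : Type*} [NormedAddCommGroup H] [InnerProductSpace ℝ H]
    (T G : H →L[ℝ] H)
    (hT : ∀ x y : H, ⟪T x, y⟫ = ⟪x, T y⟫)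
    (hG : ∀ x y : H, ⟪G x, y⟫ = ⟪x, G y⟫)
    (φ : H) (hφ : ‖φ‖ = 1) (lam1 : ℝ) (heig : T φ = lam1 • φ)
    (ψ : H) (hψ : ψ = G φ - ⟪G φ, φ⟫ • φ)
    (Λ : ℝ) (hΛ : lam1 ≤ Λ)
    (hgap : Λ * ‖ψ‖ ^ 2 ≤ ⟪T ψ, ψ⟫) :
    (Λ - lam1) * ⟪(T ∘L G - G ∘L T) φ, G φ⟫ ≤ ‖(T ∘L G - G ∘L T) φ‖ ^ 2 :=
  abstract_four_eight_general T G hT φ lam1 heig ψ hψ Λ hΛ hgap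
end

section
/- Let H be a real inner product space, let T be a symmetric (self-adjoint) continuous linear operator on H, let n ≤ N be positive integers, and let φ_1, …, φ_{N+1} be an orthonormal family with T φ_i = λ_i φ_i where λ_1 ≤ λ_2 ≤ ⋯ ≤ λ_{N+1} are real numbers. Assume that for each p = 1, …, N and every ψ ∈ H orthogonal to each of φ_1, …, φ_p one has λ_{p+1} ‖ψ‖² ≤ ⟪T ψ, ψ⟫. Let G_1, …, G_N be symmetric continuous linear operators on H such that (i) ∑_{p=1}^N ⟪[T,G_p] φ_1, G_p φ_1⟫ = n, and (ii) for every u = (u_1, …, u_N) ∈ ℝ^N with ∑_p u_p² = 1, writing G_u := ∑_{p=1}^N u_p G_p, one has ⟪[T,G_u] φ_1, G_u φ_1⟫ ≤ 1. Then ∑_{i=1}^n (λ_{i+1} − λ_1) ≤ ∑_{p=1}^N ‖[T,G_p] φ_1‖². (This is the abstract form of Theorem 4.1, whose proof uses a QR factorization to rotate the operators G_p.) -/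
open scoped RealInnerProductSpace

private lemma sum_Icc_one_fin {α : Type*} [AddCommMonoid α] (K : ℕ) (f : ℕ → α) :
    ∑ p ∈ Finset.Icc 1 K, f p = ∑ p : Fin K, f (p.1 + 1) := by
  rw [Fin.sum_univ_eq_sum_range (fun j => f (j + 1)) K,
    show Finset.Icc 1 K = Finset.Ico 1 (K+1) from (Finset.Ico_add_one_right_eq_Icc 1 K).symm,
    Finset.sum_Ico_eq_sum_range]
  simp [add_comm]

set_option maxHeartbeats 1000000 in
/-- Abstract form of Theorem 4.1. -/
theorem abstract_theorem_four_one
    {H : Type*} [NormedAddCommGroup H] [InnerProductSpace ℝ H]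
    (T : H →L[ℝ] H)
    (hT : ∀ x y : H, ⟪T x, y⟫ = ⟪x, T y⟫)
    (n N : ℕ) (hn : 0 < n) (hnN : n ≤ N)
    (φ : ℕ → H) (lam : ℕ → ℝ)
    (horth : ∀ i ∈ Finset.Icc 1 (N + 1), ∀ j ∈ Finset.Icc 1 (N + 1),
      ⟪φ i, φ j⟫ = if i = j then (1:ℝ) else 0)
    (heig : ∀ i ∈ Finset.Icc 1 (N + 1), T (φ i) = lam i • φ i)
    (hmono : ∀ i j, 1 ≤ i → i ≤ j → j ≤ N + 1 → lam i ≤ lam j)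
    (hgap : ∀ p ∈ Finset.Icc 1 N, ∀ ψ : H,
      (∀ i ∈ Finset.Icc 1 p, ⟪ψ, φ i⟫ = 0) → lam (p + 1) * ‖ψ‖ ^ 2 ≤ ⟪T ψ, ψ⟫)
    (G : ℕ → H →L[ℝ] H)
    (hGsym : ∀ p ∈ Finset.Icc 1 N, ∀ x y : H, ⟪G p x, y⟫ = ⟪x, G p y⟫)
    (hsum : ∑ p ∈ Finset.Icc 1 N,
      ⟪(T ∘L G p - G p ∘L T) (φ 1), G p (φ 1)⟫ = (n : ℝ))
    (hdir : ∀ u : ℕ → ℝ, ∑ p ∈ Finset.Icc 1 N, (u p) ^ 2 = 1 →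
      ⟪(T ∘L (∑ p ∈ Finset.Icc 1 N, u p • G p) -
          (∑ p ∈ Finset.Icc 1 N, u p • G p) ∘L T) (φ 1),
        (∑ p ∈ Finset.Icc 1 N, u p • G p) (φ 1)⟫ ≤ 1) :
    ∑ i ∈ Finset.Icc 1 n, (lam (i + 1) - lam 1) ≤
      ∑ p ∈ Finset.Icc 1 N, ‖(T ∘L G p - G p ∘L T) (φ 1)‖ ^ 2 := by
  obtain ⟨M, rfl⟩ : ∃ M, N = M + 1 := ⟨N - 1, by omega⟩
  -- the shifted operator A = T - lam 1 • id
  set A : H →L[ℝ] H := T - lam 1 • ContinuousLinearMap.id ℝ H with hA_def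
  have hA_apply : ∀ x : H, A x = T x - lam 1 • x := fun x => rfl
  have hφ1 : T (φ 1) = lam 1 • φ 1 := heig 1 (by simp)
  have hA0 : A (φ 1) = 0 := by rw [hA_apply, hφ1, sub_self]
  have hAsym : ∀ x y : H, ⟪A x, y⟫ = ⟪x, A y⟫ := by
    intro x y
    simp only [hA_apply, inner_sub_left, inner_sub_right, real_inner_smul_left,
      real_inner_smul_right, hT]
  have hAφ1 : ∀ x : H, ⟪A x, φ 1⟫ = 0 := by
    intro x; rw [hAsym, hA0, inner_zero_right]
  have hAinner : ∀ x y : H, ⟪A x, y⟫ = ⟪T x, y⟫ - lam 1 * ⟪x, y⟫ := by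
    intro x y; rw [hA_apply, inner_sub_left, real_inner_smul_left]
  have hcomm : ∀ S : H →L[ℝ] H, (T ∘L S - S ∘L T) (φ 1) = A (S (φ 1)) := by
    intro S
    simp [hφ1, hA_apply, map_smul]
  -- the vectors
  set ψ : Fin (M+1) → H := fun p => G (p.1 + 1) (φ 1) with hψ_def
  set c : Fin (M+1) → EuclideanSpace ℝ (Fin (M+1)) :=
    fun i => WithLp.toLp 2 (fun q => ⟪ψ q, φ (i.1 + 2)⟫ : Fin (M+1) → ℝ) with hc_def
  have hcard : Module.finrank ℝ (EuclideanSpace ℝ (Fin (M+1))) = Fintype.card (Fin (M+1)) := by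
    simp
  set u : OrthonormalBasis (Fin (M+1)) ℝ (EuclideanSpace ℝ (Fin (M+1))) :=
    InnerProductSpace.gramSchmidtOrthonormalBasis (𝕜 := ℝ) (ι := Fin (M+1)) hcard c with hu_def
  set ψ' : Fin (M+1) → H := fun p => ∑ q, u p q • ψ q with hψ'_def
  -- triangularity
  have htri : ∀ i p : Fin (M+1), i < p → ⟪ψ' p, φ (i.1 + 2)⟫ = 0 := by
    intro i p hip
    have h0 : (inner ℝ (u p) (c i) : ℝ) = 0 := by
      rw [hu_def]
      exact InnerProductSpace.gramSchmidtOrthonormalBasis_inv_triangular hcard c hip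
    simp only [PiLp.inner_apply, RCLike.inner_apply, conj_trivial, hc_def, PiLp.toLp_apply] at h0
    rw [hψ'_def]
    simp only [sum_inner, real_inner_smul_left]
    rw [← h0]; exact Finset.sum_congr rfl fun _ _ => mul_comm _ _
  -- column orthonormality (Parseval)
  have hcol : ∀ q r : Fin (M+1), ∑ p, u p q * u p r = if q = r then (1:ℝ) else 0 := by
    intro q r
    have h0 := u.sum_inner_mul_inner (EuclideanSpace.single q (1:ℝ))
      (EuclideanSpace.single r (1:ℝ))
    simpa [EuclideanSpace.inner_single_left, EuclideanSpace.inner_single_right,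
      EuclideanSpace.single_apply, eq_comm] using h0
  -- rotation invariance
  have hrot : ∀ v w : Fin (M+1) → H,
      ∑ p, ⟪∑ q, u p q • v q, ∑ r, u p r • w r⟫ = ∑ q, ⟪v q, w q⟫ := by
    intro v w
    have expand : ∀ p, (inner ℝ (∑ q, u p q • v q) (∑ r, u p r • w r) : ℝ)
        = ∑ q, ∑ r, u p q * (u p r * ⟪v q, w r⟫) := by
      intro p
      rw [sum_inner]
      refine Finset.sum_congr rfl fun q _ => ?_
      rw [real_inner_smul_left, inner_sum, Finset.mul_sum]
      refine Finset.sum_congr rfl fun r _ => ?_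
      rw [real_inner_smul_right]
    have key : ∀ q r : Fin (M+1), (∑ p, u p q * u p r) * ⟪v q, w r⟫
        = if q = r then ⟪v q, w r⟫ else 0 := by
      intro q r; rw [hcol]; split <;> simp
    calc ∑ p, ⟪∑ q, u p q • v q, ∑ r, u p r • w r⟫
        = ∑ p, ∑ q, ∑ r, u p q * (u p r * ⟪v q, w r⟫) :=
          Finset.sum_congr rfl fun p _ => expand p
      _ = ∑ q, ∑ r, ∑ p, u p q * (u p r * ⟪v q, w r⟫) := by
          rw [Finset.sum_comm]
          exact Finset.sum_congr rfl fun q _ => Finset.sum_comm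
      _ = ∑ q, ∑ r, (∑ p, u p q * u p r) * ⟪v q, w r⟫ := by
          refine Finset.sum_congr rfl fun q _ => Finset.sum_congr rfl fun r _ => ?_
          rw [Finset.sum_mul]
          exact Finset.sum_congr rfl fun p _ => by ring
      _ = ∑ q, ⟪v q, w q⟫ := by
          refine Finset.sum_congr rfl fun q _ => ?_
          simp [key]
  have hAψ' : ∀ p, A (ψ' p) = ∑ q, u p q • A (ψ q) := by
    intro p; rw [hψ'_def]; rw [map_sum]; simp [map_smul]
  set μ : Fin (M+1) → ℝ := fun p => ⟪A (ψ' p), ψ' p⟫ with hμ_def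
  set β : Fin (M+1) → ℝ := fun p => lam (p.1 + 2) - lam 1 with hβ_def
  have hμsum : ∑ p, μ p = (n : ℝ) := by
    have h1 : ∑ p : Fin (M+1), ⟪A (ψ p), ψ p⟫ = (n : ℝ) := by
      rw [← hsum, sum_Icc_one_fin (M+1) (fun p => ⟪(T ∘L G p - G p ∘L T) (φ 1), G p (φ 1)⟫)]
      exact Finset.sum_congr rfl fun p _ => by rw [hcomm]
    calc ∑ p, μ p = ∑ p, ⟪∑ q, u p q • A (ψ q), ∑ r, u p r • ψ r⟫ := by
          exact Finset.sum_congr rfl fun p _ =>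
            congrArg (fun z => (inner ℝ z (ψ' p) : ℝ)) (hAψ' p)
      _ = ∑ q, ⟪A (ψ q), ψ q⟫ := hrot _ _
      _ = (n : ℝ) := h1
  have hμ1 : ∀ p, μ p ≤ 1 := by
    intro p
    set u' : ℕ → ℝ := fun q => if hq : 1 ≤ q ∧ q ≤ M+1 then u p ⟨q - 1, by omega⟩ else 0
      with hu'_def
    have hval : ∀ j : Fin (M+1), u' (j.1+1) = u p j := by
      intro j
      have hj : (⟨j.1 + 1 - 1, by omega⟩ : Fin (M+1)) = j := Fin.ext (by simp)
      rw [hu'_def]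
      simp only
      rw [dif_pos ⟨by omega, by omega⟩, hj]
    have hnorm : ∑ q ∈ Finset.Icc 1 (M+1), (u' q)^2 = 1 := by
      rw [sum_Icc_one_fin (M+1) (fun q => (u' q)^2)]
      have hup : ‖u p‖ = 1 := u.orthonormal.1 p
      have h2 : (inner ℝ (u p) (u p) : ℝ) = 1 := by
        rw [real_inner_self_eq_norm_sq, hup]; norm_num
      simp only [PiLp.inner_apply, RCLike.inner_apply, conj_trivial] at h2
      calc ∑ j : Fin (M+1), (u' (j.1+1))^2 = ∑ j, u p j * u p j := by
            refine Finset.sum_congr rfl fun j _ => by rw [hval j]; ring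
        _ = 1 := h2
    have hSφ : (∑ q ∈ Finset.Icc 1 (M+1), u' q • G q) (φ 1) = ψ' p := by
      rw [ContinuousLinearMap.sum_apply]
      simp only [ContinuousLinearMap.smul_apply]
      rw [sum_Icc_one_fin (M+1) (fun q => u' q • G q (φ 1))]
      rw [hψ'_def]
      exact Finset.sum_congr rfl fun j _ => by rw [hval j]
    have h3 := hdir u' hnorm
    rw [hcomm, hSφ] at h3
    exact h3
  -- the projected vectors
  set χ : Fin (M+1) → H := fun p => ψ' p - ⟪ψ' p, φ 1⟫ • φ 1 with hχ_def
  have hχorth : ∀ p : Fin (M+1), ∀ i ∈ Finset.Icc 1 (p.1 + 1), ⟪χ p, φ i⟫ = 0 := by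
    intro p i hi
    simp only [Finset.mem_Icc] at hi
    rw [hχ_def]
    simp only [inner_sub_left, real_inner_smul_left]
    rcases eq_or_lt_of_le hi.1 with h1 | h1
    · have hφ11 : ⟪φ 1, φ 1⟫ = 1 := by
        have := horth 1 (by simp) 1 (by simp); simpa using this
      rw [← h1, hφ11]; ring
    · have hi2 : 2 ≤ i := h1
      have e1 : ⟪ψ' p, φ i⟫ = 0 := by
        have := htri ⟨i - 2, by omega⟩ p (by rw [Fin.lt_def]; simp; omega)
        simpa [show i - 2 + 2 = i by omega] using this
      have e2 : ⟪φ 1, φ i⟫ = 0 := by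
        have := horth 1 (by simp) i (by simp; omega)
        simpa [show ¬(1 = i) by omega] using this
      rw [e1, e2]; ring
  have hAχ : ∀ p, A (ψ' p) = A (χ p) := by
    intro p; rw [hχ_def]; simp [map_sub, map_smul, hA0]
  have hμχ : ∀ p, μ p = ⟪A (χ p), χ p⟫ := by
    intro p
    have : (inner ℝ (A (ψ' p)) (ψ' p) : ℝ) = ⟪A (χ p), χ p⟫ := by
      rw [hAχ p]
      have h9 : (inner ℝ (A (χ p)) (ψ' p) : ℝ)
          = ⟪A (χ p), ψ' p - ⟪ψ' p, φ 1⟫ • φ 1⟫ + ⟪ψ' p, φ 1⟫ * ⟪A (χ p), φ 1⟫ := by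
        rw [inner_sub_right, real_inner_smul_right]; ring
      rw [h9, hAφ1, mul_zero, add_zero]
    exact this
  have hβμ : ∀ p, β p * ‖χ p‖ ^ 2 ≤ μ p := by
    intro p
    have hg := hgap (p.1+1) (by simp; omega) (χ p) (hχorth p)
    rw [hμχ p, hAinner]
    rw [real_inner_self_eq_norm_sq]
    simp only [hβ_def]
    nlinarith [hg]
  have hβ0 : ∀ p, 0 ≤ β p := by
    intro p
    have := hmono 1 (p.1 + 2) le_rfl (by omega) (by omega)
    simp only [hβ_def]; linarith
  have hμ0 : ∀ p, 0 ≤ μ p := by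
    intro p
    have h1 := hβμ p
    have h2 : 0 ≤ β p * ‖χ p‖ ^ 2 := mul_nonneg (hβ0 p) (by positivity)
    linarith
  have hkey : ∀ p, β p * μ p ≤ ‖A (ψ' p)‖ ^ 2 := by
    intro p
    rw [hAχ p]
    have hcs : μ p ≤ ‖A (χ p)‖ * ‖χ p‖ := by
      rw [hμχ p]; exact real_inner_le_norm _ _
    have h1 := hβμ p
    have h2 := hμ0 p
    have h3 := hβ0 p
    rcases eq_or_lt_of_le h2 with h4 | h4
    · rw [← h4, mul_zero]; positivity
    · have e1 : μ p * μ p ≤ (‖A (χ p)‖ * ‖χ p‖) * (‖A (χ p)‖ * ‖χ p‖) :=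
        mul_le_mul hcs hcs h2 (by positivity)
      have e2 : β p * (μ p * μ p) ≤ β p * ((‖A (χ p)‖ * ‖χ p‖) * (‖A (χ p)‖ * ‖χ p‖)) :=
        mul_le_mul_of_nonneg_left e1 h3
      have e3 : β p * ((‖A (χ p)‖ * ‖χ p‖) * (‖A (χ p)‖ * ‖χ p‖))
          = ‖A (χ p)‖^2 * (β p * ‖χ p‖^2) := by ring
      have e4 : ‖A (χ p)‖^2 * (β p * ‖χ p‖^2) ≤ ‖A (χ p)‖^2 * μ p :=
        mul_le_mul_of_nonneg_left h1 (sq_nonneg _)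
      have e5 : β p * (μ p * μ p) ≤ ‖A (χ p)‖^2 * μ p := le_trans (e3 ▸ e2) e4
      refine le_of_mul_le_mul_right ?_ h4
      rw [mul_assoc]
      exact e5
  -- sum identities
  have hrhs : ∑ p ∈ Finset.Icc 1 (M+1), ‖(T ∘L G p - G p ∘L T) (φ 1)‖ ^ 2
      = ∑ p, ‖A (ψ' p)‖ ^ 2 := by
    rw [sum_Icc_one_fin (M+1) (fun p => ‖(T ∘L G p - G p ∘L T) (φ 1)‖^2)]
    calc ∑ p : Fin (M+1), ‖(T ∘L G (p.1+1) - G (p.1+1) ∘L T) (φ 1)‖^2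
        = ∑ p : Fin (M+1), ⟪A (ψ p), A (ψ p)⟫ := by
          refine Finset.sum_congr rfl fun p _ => ?_
          rw [hcomm, real_inner_self_eq_norm_sq]
      _ = ∑ p, ⟪∑ q, u p q • A (ψ q), ∑ r, u p r • A (ψ r)⟫ :=
          (hrot (fun q => A (ψ q)) (fun q => A (ψ q))).symm
      _ = ∑ p, ‖A (ψ' p)‖^2 := by
          refine Finset.sum_congr rfl fun p _ => ?_
          rw [← hAψ', real_inner_self_eq_norm_sq]
  -- final combinatorial step
  set cst : ℝ := lam (n+1) - lam 1 with hcst_def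
  have hβc : ∀ p : Fin (M+1), p.1 < n → β p ≤ cst := by
    intro p hp
    have := hmono (p.1+2) (n+1) (by omega) (by omega) (by omega)
    simp only [hβ_def, hcst_def]; linarith
  have hcβ : ∀ p : Fin (M+1), n ≤ p.1 → cst ≤ β p := by
    intro p hp
    have := hmono (n+1) (p.1+2) (by omega) (by omega) (by omega)
    simp only [hβ_def, hcst_def]; linarith
  have hLHS : ∑ i ∈ Finset.Icc 1 n, (lam (i + 1) - lam 1)
      = ∑ p : Fin (M+1), (if p.1 < n then β p else 0) := by
    rw [sum_Icc_one_fin n (fun i => lam (i+1) - lam 1)]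
    rw [Fin.sum_univ_eq_sum_range (fun j => lam (j+1+1) - lam 1) n]
    have e1 : ∑ p : Fin (M+1), (if p.1 < n then β p else 0)
        = ∑ j ∈ Finset.range (M+1), (if j < n then lam (j+2) - lam 1 else 0) := by
      rw [← Fin.sum_univ_eq_sum_range (fun j => if j < n then lam (j+2) - lam 1 else 0) (M+1)]
    rw [e1, ← Finset.sum_subset (Finset.range_subset_range.2 (by omega : n ≤ M+1))]
    · exact Finset.sum_congr rfl fun j hj => by rw [if_pos (Finset.mem_range.1 hj)]
    · intro x _ hx
      rw [if_neg (by simpa using hx)]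
  have hind : ∑ p : Fin (M+1), (if p.1 < n then (1:ℝ) else 0) = n := by
    rw [Fin.sum_univ_eq_sum_range (fun j => if j < n then (1:ℝ) else 0) (M+1)]
    rw [← Finset.sum_subset (Finset.range_subset_range.2 (by omega : n ≤ M+1))]
    · rw [Finset.sum_congr rfl fun j hj => if_pos (Finset.mem_range.1 hj)]
      simp
    · intro x _ hx
      rw [if_neg (by simpa using hx)]
  have hfinal : ∑ i ∈ Finset.Icc 1 n, (lam (i + 1) - lam 1) ≤ ∑ p, β p * μ p := by
    rw [hLHS]
    have step : ∀ p : Fin (M+1), cst * (μ p - (if p.1 < n then (1:ℝ) else 0))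
        ≤ β p * μ p - (if p.1 < n then β p else 0) := by
      intro p
      by_cases hp : p.1 < n
      · simp only [if_pos hp]
        nlinarith [hβc p hp, hμ1 p]
      · simp only [if_neg hp]
        have := hcβ p (by omega)
        nlinarith [hμ0 p]
    have hsum2 := Finset.sum_le_sum (fun p (_ : p ∈ Finset.univ) => step p)
    have hz : ∑ p : Fin (M+1), cst * (μ p - (if p.1 < n then (1:ℝ) else 0)) = 0 := by
      rw [← Finset.mul_sum, Finset.sum_sub_distrib, hμsum, hind, sub_self, mul_zero]
    have h2 : ∑ p : Fin (M+1), (β p * μ p - (if p.1 < n then β p else 0))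
        = ∑ p, β p * μ p - ∑ p : Fin (M+1), (if p.1 < n then β p else 0) :=
      Finset.sum_sub_distrib _ _
    rw [hz, h2] at hsum2
    linarith
  calc ∑ i ∈ Finset.Icc 1 n, (lam (i + 1) - lam 1) ≤ ∑ p, β p * μ p := hfinal
    _ ≤ ∑ p, ‖A (ψ' p)‖ ^ 2 := Finset.sum_le_sum fun p _ => hkey p
    _ = ∑ p ∈ Finset.Icc 1 (M+1), ‖(T ∘L G p - G p ∘L T) (φ 1)‖ ^ 2 := hrhs.symm
end

section
/- Let n be a positive integer and let (μ_i)_{i ≥ 1} be a nondecreasing sequence of positive real numbers which for every k ≥ 1 satisfies Yang's first inequality ∑_{i=1}^k (μ_{k+1} − μ_i)(μ_{k+1} − (1 + 4/n) μ_i) ≤ 0. Then for every k ≥ 1, μ_{k+1} ≤ (1 + 4/n) · k^{2/n} · μ_1. (This is the sequence form of inequality (4.17), quoted from Cheng–Yang and applied in the paper to the shifted Dirac eigenvalues μ_i = λ_i + (1/4)(n² sup H² − inf S).) -/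
lemma cy_exp_cubic {x : ℝ} (hx : 0 ≤ x) : 1 + x + x^2/2 + x^3/6 ≤ Real.exp x := by
  have h := Real.sum_le_exp_of_nonneg hx 4
  simp [Finset.sum_range_succ, Nat.factorial] at h
  linarith

lemma cy_two_rpow {e : ℝ} (he : 0 < e) (he2 : e ≤ 2) : 1 + e + e^2 ≤ (2:ℝ)^(2*e) := by
  have hl : (0.6931471803:ℝ) < Real.log 2 := Real.log_two_gt_d9
  have h2 : (2:ℝ)^(2*e) = Real.exp (Real.log 2 * (2*e)) := Real.rpow_def_of_pos (by norm_num) _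
  have hx : 0 ≤ Real.log 2 * (2*e) := by nlinarith
  have hc := cy_exp_cubic hx
  have hcube : 0 ≤ (Real.log 2 * (2*e))^3 := pow_nonneg hx 3
  have hl2 : (0.6931471803:ℝ)^2 < (Real.log 2)^2 := by nlinarith
  rw [h2]
  nlinarith [hc, hl, hl2, he, he2, hcube, sq_nonneg e,
    mul_lt_mul_of_pos_right hl he, mul_lt_mul_of_pos_right hl2 (mul_pos he he)]

lemma cy_log_pade {u : ℝ} (hu : 0 ≤ u) : 2*u/(2+u) ≤ Real.log (1+u) := by
  have hderiv : ∀ v ∈ Set.Ici (0:ℝ),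
      HasDerivAt (fun w : ℝ => Real.log (1+w) - 2*w/(2+w)) (1/(1+v) - 4/(2+v)^2) v := by
    intro v hv
    simp only [Set.mem_Ici] at hv
    have h1 : HasDerivAt (fun w : ℝ => 1+w) 1 v := by
      simpa using (hasDerivAt_id v).const_add (1:ℝ)
    have h2 : HasDerivAt (fun w : ℝ => Real.log (1+w)) (1/(1+v)) v := by
      simpa using h1.log (by linarith)
    have h3 : HasDerivAt (fun w : ℝ => 2*w/(2+w)) (4/(2+v)^2) v := by
      have hn : HasDerivAt (fun w : ℝ => 2*w) 2 v := by
        simpa [mul_comm] using (hasDerivAt_id v).const_mul (2:ℝ)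
      have hd : HasDerivAt (fun w : ℝ => 2+w) 1 v := by
        simpa using (hasDerivAt_id v).const_add (2:ℝ)
      have h : HasDerivAt (fun w : ℝ => 2*w/(2+w)) ((2*(2+v) - 2*v*1)/(2+v)^2) v := hn.div hd (by linarith)
      convert h using 1
      ring
    exact h2.sub h3
  have hmono : MonotoneOn (fun w : ℝ => Real.log (1+w) - 2*w/(2+w)) (Set.Ici 0) := by
    apply monotoneOn_of_deriv_nonneg (convex_Ici 0)
    · exact fun v hv => (hderiv v hv).continuousAt.continuousWithinAt
    · intro v hv
      rw [interior_Ici, Set.mem_Ioi] at hv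
      exact (hderiv v (le_of_lt hv)).differentiableAt.differentiableWithinAt
    · intro v hv
      rw [interior_Ici, Set.mem_Ioi] at hv
      rw [(hderiv v hv.le).deriv]
      have h1 : (0:ℝ) < 1 + v := by linarith [hv.le]
      have h2 : (0:ℝ) < 2 + v := by linarith [hv.le]
      have h4 : 1/(1+v) - 4/(2+v)^2 = v^2/((1+v)*(2+v)^2) := by
        field_simp
        ring
      rw [h4]
      positivity
  have h0 := hmono (Set.self_mem_Ici) (Set.mem_Ici.mpr hu) hu
  simp at h0
  linarith

set_option maxHeartbeats 1000000 in
lemma cy_poly {K e : ℝ} (hK : 2 ≤ K) (he0 : 0 ≤ e) :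
    0 ≤ ((((K+1)*(2*K+1)^3 + (K+1)^2*(4*e*(2*K+1)^2 + 8*e^2*(2*K+1) + 32/3*e^3)) + (1+2*e)*(K-e)*(2*K+1)^3)*(((K+1)*(2*K+1)^3 + (K+1)^2*(4*e*(2*K+1)^2 + 8*e^2*(2*K+1) + 32/3*e^3)) - (1+2*e)*(K+1+e)*(2*K+1)^3) - (1+2*e)^2*(1+e)*e*(2*K+1)^6) := by
  have hk : (0:ℝ) ≤ K - 2 := by linarith
  have he : (0:ℝ) ≤ e := he0
  linarith [mul_nonneg (pow_nonneg hk 0) (pow_nonneg he 2), mul_nonneg (pow_nonneg hk 0) (pow_nonneg he 3), mul_nonneg (pow_nonneg hk 0) (pow_nonneg he 4), mul_nonneg (pow_nonneg hk 0) (pow_nonneg he 5), mul_nonneg (pow_nonneg hk 0) (pow_nonneg he 6), mul_nonneg (pow_nonneg hk 1) (pow_nonneg he 2), mul_nonneg (pow_nonneg hk 1) (pow_nonneg he 3), mul_nonneg (pow_nonneg hk 1) (pow_nonneg he 4), mul_nonneg (pow_nonneg hk 1) (pow_nonneg he 5), mul_nonneg (pow_nonneg hk 1) (pow_nonneg he 6),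 mul_nonneg (pow_nonneg hk 2) (pow_nonneg he 2), mul_nonneg (pow_nonneg hk 2) (pow_nonneg he 3), mul_nonneg (pow_nonneg hk 2) (pow_nonneg he 4), mul_nonneg (pow_nonneg hk 2) (pow_nonneg he 5), mul_nonneg (pow_nonneg hk 2) (pow_nonneg he 6), mul_nonneg (pow_nonneg hk 3) (pow_nonneg he 2), mul_nonneg (pow_nonneg hk 3) (pow_nonneg he 3), mul_nonneg (pow_nonneg hk 3) (pow_nonneg he 4), mul_nonneg (pow_nonneg hk 3) (pow_nonneg he 5), mul_nonneg (pow_nonneg hk 3) (pow_nonneg he 6), mul_nonneg (pow_nonneg hk 4) (pow_nonneg he 2), mul_nonneg (pow_nonneg hk 4) (pow_nonneg he 3), mul_nonneg (pow_nonneg hk 4) (pow_nonneg he 4), mul_nonneg (pow_nonneg hk 4) (pow_nonneg he 5), mul_nonneg (pow_nonneg hk 4) (pow_nonneg he 6), mul_nonneg (pow_nonneg hk 5) (pow_nonneg he 2), mul_nonneg (pow_nonneg hk 5) (pow_nonneg he 3), mul_nonneg (pow_nonneg hk 5) (pow_nonneg he 4), mul_nonneg (pow_nonneg hk 6) (pow_nonneg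 he 2), mul_nonneg (pow_nonneg hk 6) (pow_nonneg he 3), mul_nonneg (pow_nonneg hk 6) (pow_nonneg he 4)]

set_option maxHeartbeats 1000000 in
lemma cy_step {K e L m F : ℝ} (hK : 2 ≤ K) (he : 0 < e) (he2 : e ≤ 2)
    (hslack : (m-(1+e)*L)^2 + (1+e)*e*L^2 ≤ (1+2*e)*F) :
    (2*K+1)^3*(K*(K+1)*F - (1+e)*K*L^2 + 2*(1+e)*K*L*m - (K-e)*m^2)
      ≤ (K+1)^2*((2*K+1)^3 + 4*e*(2*K+1)^2 + 8*e^2*(2*K+1) + 32/3*e^3)*F := by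
  have hT : (0:ℝ) < 2*K+1 := by linarith
  have hcond := cy_poly hK he.le
  have hMt : (0:ℝ) < ((K+1)*(2*K+1)^3 + (K+1)^2*(4*e*(2*K+1)^2 + 8*e^2*(2*K+1) + 32/3*e^3)) := by
    nlinarith [pow_pos hT 3, pow_pos hT 2, mul_pos (mul_pos he he) he, mul_pos he he,
      mul_nonneg (mul_nonneg he.le (pow_pos hT 2).le) (sq_nonneg (K+1)),
      mul_nonneg (mul_nonneg (mul_nonneg he.le he.le) hT.le) (sq_nonneg (K+1)),
      mul_nonneg (mul_nonneg (mul_nonneg he.le he.le) he.le) (sq_nonneg (K+1))]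
  have hAt : (0:ℝ) < (((K+1)*(2*K+1)^3 + (K+1)^2*(4*e*(2*K+1)^2 + 8*e^2*(2*K+1) + 32/3*e^3)) + (1+2*e)*(K-e)*(2*K+1)^3) := by
    nlinarith [hMt, mul_nonneg (mul_nonneg (by linarith : (0:ℝ) ≤ 1+2*e) (by linarith : (0:ℝ) ≤ K-e)) (pow_pos hT 3).le]
  have hC : (0:ℝ) < (1+2*e)*(((K+1)*(2*K+1)^3 + (K+1)^2*(4*e*(2*K+1)^2 + 8*e^2*(2*K+1) + 32/3*e^3)) + (1+2*e)*(K-e)*(2*K+1)^3) := mul_pos (by linarith) hAt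
  have key : (1+2*e)*(((K+1)*(2*K+1)^3 + (K+1)^2*(4*e*(2*K+1)^2 + 8*e^2*(2*K+1) + 32/3*e^3)) + (1+2*e)*(K-e)*(2*K+1)^3)*
      ((K+1)^2*((2*K+1)^3 + 4*e*(2*K+1)^2 + 8*e^2*(2*K+1) + 32/3*e^3)*F
        - (2*K+1)^3*(K*(K+1)*F - (1+e)*K*L^2 + 2*(1+e)*K*L*m - (K-e)*m^2))
      = (((K+1)*(2*K+1)^3 + (K+1)^2*(4*e*(2*K+1)^2 + 8*e^2*(2*K+1) + 32/3*e^3)) + (1+2*e)*(K-e)*(2*K+1)^3)*((K+1)*(2*K+1)^3 + (K+1)^2*(4*e*(2*K+1)^2 + 8*e^2*(2*K+1) + 32/3*e^3))*((1+2*e)*F - (m-(1+e)*L)^2 - (1+e)*e*L^2)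
        + ((((K+1)*(2*K+1)^3 + (K+1)^2*(4*e*(2*K+1)^2 + 8*e^2*(2*K+1) + 32/3*e^3)) + (1+2*e)*(K-e)*(2*K+1)^3)*(m-(1+e)*L) - (1+2*e)*(1+e)*e*(2*K+1)^3*L)^2
        + (1+e)*e*((((K+1)*(2*K+1)^3 + (K+1)^2*(4*e*(2*K+1)^2 + 8*e^2*(2*K+1) + 32/3*e^3)) + (1+2*e)*(K-e)*(2*K+1)^3)*(((K+1)*(2*K+1)^3 + (K+1)^2*(4*e*(2*K+1)^2 + 8*e^2*(2*K+1) + 32/3*e^3)) - (1+2*e)*(K+1+e)*(2*K+1)^3) - (1+2*e)^2*(1+e)*e*(2*K+1)^6)*L^2 := by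
    ring
  have h1 : (0:ℝ) ≤ (((K+1)*(2*K+1)^3 + (K+1)^2*(4*e*(2*K+1)^2 + 8*e^2*(2*K+1) + 32/3*e^3)) + (1+2*e)*(K-e)*(2*K+1)^3)*((K+1)*(2*K+1)^3 + (K+1)^2*(4*e*(2*K+1)^2 + 8*e^2*(2*K+1) + 32/3*e^3))*((1+2*e)*F - (m-(1+e)*L)^2 - (1+e)*e*L^2) :=
    mul_nonneg (mul_nonneg hAt.le hMt.le) (by linarith)
  have h2 : (0:ℝ) ≤ (1+e)*e*((((K+1)*(2*K+1)^3 + (K+1)^2*(4*e*(2*K+1)^2 + 8*e^2*(2*K+1) + 32/3*e^3)) + (1+2*e)*(K-e)*(2*K+1)^3)*(((K+1)*(2*K+1)^3 + (K+1)^2*(4*e*(2*K+1)^2 + 8*e^2*(2*K+1) + 32/3*e^3)) - (1+2*e)*(K+1+e)*(2*K+1)^3) - (1+2*e)^2*(1+e)*e*(2*K+1)^6)*L^2 :=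
    mul_nonneg (mul_nonneg (mul_nonneg (by linarith) he.le) hcond) (sq_nonneg L)
  have h3 : (0:ℝ) ≤ (1+2*e)*(((K+1)*(2*K+1)^3 + (K+1)^2*(4*e*(2*K+1)^2 + 8*e^2*(2*K+1) + 32/3*e^3)) + (1+2*e)*(K-e)*(2*K+1)^3)*
      ((K+1)^2*((2*K+1)^3 + 4*e*(2*K+1)^2 + 8*e^2*(2*K+1) + 32/3*e^3)*F
        - (2*K+1)^3*(K*(K+1)*F - (1+e)*K*L^2 + 2*(1+e)*K*L*m - (K-e)*m^2)) := by
    rw [key]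
    have := sq_nonneg ((((K+1)*(2*K+1)^3 + (K+1)^2*(4*e*(2*K+1)^2 + 8*e^2*(2*K+1) + 32/3*e^3)) + (1+2*e)*(K-e)*(2*K+1)^3)*(m-(1+e)*L) - (1+2*e)*(1+e)*e*(2*K+1)^3*L)
    linarith
  have h4 := (mul_nonneg_iff_of_pos_left hC).mp h3
  linarith

lemma cy_sum_expand (μ : ℕ → ℝ) (c X : ℝ) (k : ℕ) :
    ∑ i ∈ Finset.Icc 1 k, (X - μ i)*(X - c*μ i)
      = (k:ℝ)*X^2 - (1+c)*X*(∑ i ∈ Finset.Icc 1 k, μ i)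
        + c*(∑ i ∈ Finset.Icc 1 k, (μ i)^2) := by
  induction k with
  | zero => simp
  | succ m ih =>
      rw [Finset.sum_Icc_succ_top (by omega), Finset.sum_Icc_succ_top (by omega),
        Finset.sum_Icc_succ_top (by omega), ih]
      push_cast
      ring

set_option maxHeartbeats 8000000 in
/-- Sequence form of inequality (4.17) (Cheng–Yang). -/
theorem cheng_yang_sequence_bound
    (n : ℕ) (hn : 0 < n) (μ : ℕ → ℝ)
    (hpos : ∀ i, 1 ≤ i → 0 < μ i)
    (hmono : ∀ i, 1 ≤ i → μ i ≤ μ (i + 1))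
    (hyang1 : ∀ k, 1 ≤ k → ∑ i ∈ Finset.Icc 1 k,
        (μ (k + 1) - μ i) * (μ (k + 1) - (1 + 4 / (n : ℝ)) * μ i) ≤ 0) :
    ∀ k, 1 ≤ k → μ (k + 1) ≤ (1 + 4 / (n : ℝ)) * (k : ℝ) ^ ((2 : ℝ) / (n : ℝ)) * μ 1 := by
  have hn1 : (1:ℝ) ≤ (n:ℝ) := by exact_mod_cast hn
  set e : ℝ := 2/(n:ℝ) with hedef
  have he : 0 < e := by rw [hedef]; positivity
  have he2 : e ≤ 2 := by
    rw [hedef, div_le_iff₀ (by linarith)]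
    linarith
  have h4n : 1 + 4/(n:ℝ) = 1 + 2*e := by rw [hedef]; ring
  obtain ⟨S, hSk⟩ : ∃ S : ℕ → ℝ, ∀ k, S k = ∑ i ∈ Finset.Icc 1 k, μ i :=
    ⟨_, fun _ => rfl⟩
  obtain ⟨Q, hQk⟩ : ∃ Q : ℕ → ℝ, ∀ k, Q k = ∑ i ∈ Finset.Icc 1 k, (μ i)^2 :=
    ⟨_, fun _ => rfl⟩
  have hμ1 : 0 < μ 1 := hpos 1 le_rfl
  have hSpos : ∀ k, 1 ≤ k → 0 < S k := by
    intro k hk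
    rw [hSk]
    apply Finset.sum_pos
    · intro i hi
      exact hpos i (Finset.mem_Icc.mp hi).1
    · exact ⟨1, Finset.mem_Icc.mpr ⟨le_rfl, hk⟩⟩
  have hexp : ∀ k : ℕ, 1 ≤ k →
      (k:ℝ)*(μ (k+1))^2 - 2*(1+e)*(S k)*(μ (k+1)) + (1+2*e)*(Q k) ≤ 0 := by
    intro k hk
    have h := hyang1 k hk
    rw [cy_sum_expand μ (1+4/(n:ℝ)) (μ (k+1)) k, ← hSk k, ← hQk k, h4n] at h
    linarith
  have hkey : ∀ k : ℕ, 1 ≤ k →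
      (μ (k+1) - (1+e)*(S k/(k:ℝ)))^2 + (1+e)*e*(S k/(k:ℝ))^2
        ≤ (1+2*e)*((1+e)*(S k/(k:ℝ))^2 - Q k/(k:ℝ)) := by
    intro k hk
    have hk0 : (0:ℝ) < (k:ℝ) := by exact_mod_cast hk
    have h := hexp k hk
    have h2 : ((k:ℝ)*(μ (k+1))^2 - 2*(1+e)*(S k)*(μ (k+1)) + (1+2*e)*(Q k))/(k:ℝ) ≤ 0 :=
      div_nonpos_of_nonpos_of_nonneg h hk0.le
    have hid : (μ (k+1) - (1+e)*(S k/(k:ℝ)))^2 + (1+e)*e*(S k/(k:ℝ))^2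
        - (1+2*e)*((1+e)*(S k/(k:ℝ))^2 - Q k/(k:ℝ))
        = ((k:ℝ)*(μ (k+1))^2 - 2*(1+e)*(S k)*(μ (k+1)) + (1+2*e)*(Q k))/(k:ℝ) := by
      field_simp
      ring
    linarith
  have hFpos : ∀ k : ℕ, 1 ≤ k → 0 < (1+e)*(S k/(k:ℝ))^2 - Q k/(k:ℝ) := by
    intro k hk
    have hk0 : (0:ℝ) < (k:ℝ) := by exact_mod_cast hk
    have hL : 0 < S k/(k:ℝ) := div_pos (hSpos k hk) hk0
    have h := hkey k hk
    nlinarith [sq_nonneg (μ (k+1) - (1+e)*(S k/(k:ℝ))),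
      mul_pos (mul_pos (show (0:ℝ) < 1+e by linarith) he) (mul_pos hL hL)]
  have hchain : ∀ k : ℕ, 1 ≤ k →
      (1+e)*(S k/(k:ℝ))^2 - Q k/(k:ℝ) ≤ (k:ℝ)^(2*e) * (e*(μ 1)^2) := by
    intro k hk
    induction k, hk using Nat.le_induction with
    | base =>
        have hS1 : S 1 = μ 1 := by rw [hSk]; simp
        have hQ1 : Q 1 = (μ 1)^2 := by rw [hQk]; simp
        rw [hS1, hQ1]
        norm_num [Real.one_rpow]
        nlinarith [sq_nonneg (μ 1)]
    | succ k hk1 ih =>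
        by_cases hk1' : k = 1
        · subst hk1'
          have hS2 : S (1+1) = μ 1 + μ 2 := by
            rw [hSk, Finset.sum_Icc_succ_top (by omega)]
            simp
          have hQ2 : Q (1+1) = (μ 1)^2 + (μ 2)^2 := by
            rw [hQk, Finset.sum_Icc_succ_top (by omega)]
            simp
          have hy := hyang1 1 le_rfl
          rw [Finset.Icc_self, Finset.sum_singleton, h4n] at hy
          have hlo : μ 1 ≤ μ 2 := hmono 1 le_rfl
          have hup : μ 2 ≤ (1+2*e)*μ 1 := by nlinarith [hy, hlo, mul_pos he hμ1]
          have h2r := cy_two_rpow he he2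
          rw [hS2, hQ2]
          have hcast2 : ((1+1:ℕ):ℝ) = 2 := by norm_num
          rw [hcast2]
          have hint1 : (0:ℝ) ≤ e*(1+e)*((1+2*e)*μ 1 - μ 2)^2 :=
            mul_nonneg (mul_nonneg he.le (by linarith)) (sq_nonneg _)
          have hint2 : (0:ℝ) ≤ e^2*(((1+2*e)*μ 1 - μ 2)*(μ 2 - μ 1)) :=
            mul_nonneg (pow_nonneg he.le 2)
              (mul_nonneg (sub_nonneg.mpr hup) (sub_nonneg.mpr hlo))
          have hF2 : (1+e)*((μ 1 + μ 2)/2)^2 - ((μ 1)^2 + (μ 2)^2)/2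
              ≤ e*(1+e+e^2)*(μ 1)^2 := by
            nlinarith [hint1, hint2, he]
          have hlast : e*(1+e+e^2)*(μ 1)^2 ≤ (2:ℝ)^(2*e)*(e*(μ 1)^2) := by
            have h0 : (0:ℝ) ≤ e*(μ 1)^2 := by positivity
            nlinarith [mul_le_mul_of_nonneg_right h2r h0]
          linarith
        · have hk2 : 2 ≤ k := by omega
          have hK2 : (2:ℝ) ≤ (k:ℝ) := by exact_mod_cast hk2
          have hk0 : (0:ℝ) < (k:ℝ) := by linarith
          have hkne : (k:ℝ) ≠ 0 := ne_of_gt hk0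
          have hK10 : (0:ℝ) < (k:ℝ)+1 := by linarith
          have hT0 : (0:ℝ) < 2*(k:ℝ)+1 := by linarith
          have hkey' := hkey k (by omega)
          have hFk := hFpos k (by omega)
          have hstep := cy_step hK2 he he2 hkey'
          have hSrec : S (k+1) = S k + μ (k+1) := by
            rw [hSk, hSk, Finset.sum_Icc_succ_top (by omega)]
          have hQrec : Q (k+1) = Q k + (μ (k+1))^2 := by
            rw [hQk, hQk, Finset.sum_Icc_succ_top (by omega)]
          have hcast : ((k+1:ℕ):ℝ) = (k:ℝ)+1 := by push_cast; ring
          rw [hcast]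
          have hid : (((k:ℝ)+1)^2*(2*(k:ℝ)+1)^3) *
              ((1+e)*(S (k+1)/((k:ℝ)+1))^2 - Q (k+1)/((k:ℝ)+1))
              = (2*(k:ℝ)+1)^3*((k:ℝ)*((k:ℝ)+1)*((1+e)*(S k/(k:ℝ))^2 - Q k/(k:ℝ))
                - (1+e)*(k:ℝ)*(S k/(k:ℝ))^2
                + 2*(1+e)*(k:ℝ)*(S k/(k:ℝ))*(μ (k+1))
                - ((k:ℝ)-e)*(μ (k+1))^2) := by
            rw [hSrec, hQrec]
            field_simp
            ring
          have hcomb : (((k:ℝ)+1)^2*(2*(k:ℝ)+1)^3) *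
              ((1+e)*(S (k+1)/((k:ℝ)+1))^2 - Q (k+1)/((k:ℝ)+1))
              ≤ ((k:ℝ)+1)^2*((2*(k:ℝ)+1)^3 + 4*e*(2*(k:ℝ)+1)^2
                  + 8*e^2*(2*(k:ℝ)+1) + 32/3*e^3)
                *((1+e)*(S k/(k:ℝ))^2 - Q k/(k:ℝ)) := by
            rw [hid]
            exact hstep
          have hratio : (2*(k:ℝ)+1)^3 + 4*e*(2*(k:ℝ)+1)^2 + 8*e^2*(2*(k:ℝ)+1) + 32/3*e^3
              ≤ (2*(k:ℝ)+1)^3 * ((((k:ℝ)+1)/(k:ℝ))^(2*e)) := by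
            have hx0 : (0:ℝ) < ((k:ℝ)+1)/(k:ℝ) := by positivity
            have hlog : 2/(2*(k:ℝ)+1) ≤ Real.log (((k:ℝ)+1)/(k:ℝ)) := by
              have h1 : ((k:ℝ)+1)/(k:ℝ) = 1 + 1/(k:ℝ) := by field_simp
              have h2 : 2*(1/(k:ℝ))/(2+1/(k:ℝ)) = 2/(2*(k:ℝ)+1) := by
                field_simp
              rw [h1, ← h2]
              exact cy_log_pade (by positivity)
            have hlog0 : 0 ≤ Real.log (((k:ℝ)+1)/(k:ℝ)) :=
              le_trans (by positivity) hlog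
            have hy0 : 0 ≤ Real.log (((k:ℝ)+1)/(k:ℝ)) * (2*e) := by positivity
            have hcube := cy_exp_cubic hy0
            have hrw : (((k:ℝ)+1)/(k:ℝ))^(2*e)
                = Real.exp (Real.log (((k:ℝ)+1)/(k:ℝ)) * (2*e)) :=
              Real.rpow_def_of_pos hx0 _
            rw [hrw]
            have hxy : 4*e/(2*(k:ℝ)+1) ≤ Real.log (((k:ℝ)+1)/(k:ℝ)) * (2*e) := by
              have h := mul_le_mul_of_nonneg_right hlog (show (0:ℝ) ≤ 2*e by linarith)
              calc 4*e/(2*(k:ℝ)+1) = 2/(2*(k:ℝ)+1)*(2*e) := by ring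
                _ ≤ _ := h
            set x := 4*e/(2*(k:ℝ)+1) with hxdef
            set y := Real.log (((k:ℝ)+1)/(k:ℝ)) * (2*e) with hydef
            have hx0' : 0 ≤ x := by rw [hxdef]; positivity
            have hy0' : 0 ≤ y := le_trans hx0' hxy
            have hq : 0 ≤ x^2 + x*y + y^2 := by nlinarith [sq_nonneg (x+y), sq_nonneg x, sq_nonneg y]
            have hpoly : 1 + x + x^2/2 + x^3/6 ≤ 1 + y + y^2/2 + y^3/6 := by
              nlinarith [mul_nonneg (sub_nonneg.mpr hxy) (add_nonneg hx0' hy0'),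
                mul_nonneg (sub_nonneg.mpr hxy) hq, hxy]
            have hid2 : (2*(k:ℝ)+1)^3 + 4*e*(2*(k:ℝ)+1)^2 + 8*e^2*(2*(k:ℝ)+1) + 32/3*e^3
                = (2*(k:ℝ)+1)^3 * (1 + x + x^2/2 + x^3/6) := by
              rw [hxdef]
              field_simp
              ring
            rw [hid2]
            exact mul_le_mul_of_nonneg_left (le_trans hpoly hcube) (pow_pos hT0 3).le
          have hθ0 : 0 ≤ (((k:ℝ)+1)/(k:ℝ))^(2*e) := Real.rpow_nonneg (by positivity) _
          have h5 : (1+e)*(S (k+1)/((k:ℝ)+1))^2 - Q (k+1)/((k:ℝ)+1)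
              ≤ (((k:ℝ)+1)/(k:ℝ))^(2*e) * ((1+e)*(S k/(k:ℝ))^2 - Q k/(k:ℝ)) := by
            have hR := mul_le_mul_of_nonneg_right hratio hFk.le
            have hR2 := mul_le_mul_of_nonneg_left hR (sq_nonneg ((k:ℝ)+1))
            have h6 : (((k:ℝ)+1)^2*(2*(k:ℝ)+1)^3) *
                ((1+e)*(S (k+1)/((k:ℝ)+1))^2 - Q (k+1)/((k:ℝ)+1))
                ≤ (((k:ℝ)+1)^2*(2*(k:ℝ)+1)^3) *
                  ((((k:ℝ)+1)/(k:ℝ))^(2*e) * ((1+e)*(S k/(k:ℝ))^2 - Q k/(k:ℝ))) := by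
              linarith [hcomb, hR2]
            exact le_of_mul_le_mul_left h6 (by positivity)
          calc (1+e)*(S (k+1)/((k:ℝ)+1))^2 - Q (k+1)/((k:ℝ)+1)
              ≤ (((k:ℝ)+1)/(k:ℝ))^(2*e) * ((1+e)*(S k/(k:ℝ))^2 - Q k/(k:ℝ)) := h5
            _ ≤ (((k:ℝ)+1)/(k:ℝ))^(2*e) * ((k:ℝ)^(2*e) * (e*(μ 1)^2)) :=
                mul_le_mul_of_nonneg_left ih hθ0
            _ = ((k:ℝ)+1)^(2*e) * (e*(μ 1)^2) := by
                rw [← mul_assoc, ← Real.mul_rpow (by positivity) hk0.le,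
                  div_mul_cancel₀ _ hkne]
  intro k hk
  have hk0 : (0:ℝ) < (k:ℝ) := by exact_mod_cast hk
  have hkey' := hkey k hk
  have hch := hchain k hk
  have hμk : 0 < μ (k+1) := hpos (k+1) (by omega)
  have h1 : e*(μ (k+1))^2
      ≤ (1+2*e)*((μ (k+1) - (1+e)*(S k/(k:ℝ)))^2 + (1+e)*e*(S k/(k:ℝ))^2) := by
    linarith [mul_nonneg (show (0:ℝ) ≤ 1+e by linarith)
      (sq_nonneg (μ (k+1) - (1+2*e)*(S k/(k:ℝ))))]
  have h2 : (1+2*e)*((μ (k+1) - (1+e)*(S k/(k:ℝ)))^2 + (1+e)*e*(S k/(k:ℝ))^2)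
      ≤ (1+2*e)*((1+2*e)*((1+e)*(S k/(k:ℝ))^2 - Q k/(k:ℝ))) :=
    mul_le_mul_of_nonneg_left hkey' (by linarith)
  have h3 : (1+2*e)*((1+2*e)*((1+e)*(S k/(k:ℝ))^2 - Q k/(k:ℝ)))
      ≤ (1+2*e)*((1+2*e)*((k:ℝ)^(2*e)*(e*(μ 1)^2))) :=
    mul_le_mul_of_nonneg_left (mul_le_mul_of_nonneg_left hch (by linarith)) (by linarith)
  have hke : (k:ℝ)^(2*e) = ((k:ℝ)^e)^2 := by
    rw [show 2*e = e*2 by ring, Real.rpow_mul hk0.le, ← Real.rpow_natCast ((k:ℝ)^e) 2]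
    norm_num
  rw [hke] at h3
  have h4 : e*(μ (k+1))^2 ≤ e*((1+2*e)*(k:ℝ)^e*(μ 1))^2 := by linarith [h1, h2, h3]
  have hμ2 : (μ (k+1))^2 ≤ ((1+2*e)*(k:ℝ)^e*(μ 1))^2 := le_of_mul_le_mul_left h4 he
  have hkepos : 0 < (k:ℝ)^e := Real.rpow_pos_of_pos hk0 e
  have hRpos : 0 < (1+2*e)*(k:ℝ)^e*(μ 1) := by positivity
  have hfinal : μ (k+1) ≤ (1+2*e)*(k:ℝ)^e*(μ 1) := by nlinarith [hμ2, hRpos, hμk]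
  rw [h4n]
  exact hfinal
end
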